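/- Let (T0, T̃0) be a joint pair of abstract Friedrichs operators on a complex Hilbert space H and let V be a subspace of the graph space W satisfying (V)-boundary conditions. Then W = V ∔ ker T1 (direct sum); if p2 : W → W denotes the projection onto ker T1 along V, then the operator M ∈ L(W;W') defined by M u := D(u − 2 p2 u) satisfies (M)-boundary conditions and ker(D − M) = V. -/

import Mathlib

open scoped InnerProductSpace
open Filter Topology LinearPMap

noncomputable section

variable {H : Type*} [NormedAddCommGroup H] [InnerProductSpace ℂ H] [CompleteSpace H]

/-- The inner product used in the paper (antilinear in the **second** entry):
`pInner x y = ⟪y, x⟫` in Mathlib's convention. -/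
def pInner {H : Type*} [NormedAddCommGroup H] [InnerProductSpace ℂ H] (x y : H) : ℂ :=
  ⟪y, x⟫_ℂ

/-- A pair of densely defined operators with common domain satisfying conditions (T1) and (T2). -/
structure IsDualPairT12 (T0 T0t : H →ₗ.[ℂ] H) (lam : ℝ) : Prop where
  dom_eq : T0.domain = T0t.domain
  dense' : Dense (T0.domain : Set H)
  sym : ∀ (φ : T0.domain) (ψ : T0t.domain), pInner (T0 φ) (ψ : H) = pInner (φ : H) (T0t ψ)
  lam_pos : 0 < lam
  bound : ∀ (x : H) (hx : x ∈ T0.domain),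
    ‖T0 ⟨x, hx⟩ + T0t ⟨x, dom_eq.le hx⟩‖ ≤ 2 * lam * ‖x‖

/-- A joint pair of abstract Friedrichs operators: (T1), (T2) and (T3). -/
structure IsFriedrichsPair (T0 T0t : H →ₗ.[ℂ] H) (lam mu : ℝ)
    extends IsDualPairT12 T0 T0t lam : Prop where
  mu_pos : 0 < mu
  coercive : ∀ (x : H) (hx : x ∈ T0.domain),
    2 * mu * ‖x‖ ^ 2 ≤ (pInner (T0 ⟨x, hx⟩ + T0t ⟨x, dom_eq.le hx⟩) x).re

/-- The boundary form `[u|v] := ⟨T₁u , v⟩ − ⟨u , T̃₁v⟩` on the graph space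
`W := dom T₁ = dom (T̃₀)*`.  The hypothesis `hW` expresses the fact `dom T₁ = dom T̃₁`. -/
def bform (T0 T0t : H →ₗ.[ℂ] H) (hW : T0t.adjoint.domain = T0.adjoint.domain)
    (u v : T0t.adjoint.domain) : ℂ :=
  pInner (T0t.adjoint u) (v : H) - pInner (u : H) (T0.adjoint ⟨(v : H), hW.le v.2⟩)

/-- `X^[⊥]`, the `[·|·]`-orthogonal complement of `X ⊆ W` in the graph space. -/
def iorth (T0 T0t : H →ₗ.[ℂ] H) (hW : T0t.adjoint.domain = T0.adjoint.domain)
    (X : Set ↥T0t.adjoint.domain) : Set ↥T0t.adjoint.domain :=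
  {u | ∀ v ∈ X, bform T0 T0t hW u v = 0}

/-- `W⁺ = {u ∈ W : [u|u] ≥ 0}`. -/
def Wplus (T0 T0t : H →ₗ.[ℂ] H) (hW : T0t.adjoint.domain = T0.adjoint.domain) :
    Set ↥T0t.adjoint.domain :=
  {u | 0 ≤ (bform T0 T0t hW u u).re}

/-- `W⁻ = {u ∈ W : [u|u] ≤ 0}`. -/
def Wminus (T0 T0t : H →ₗ.[ℂ] H) (hW : T0t.adjoint.domain = T0.adjoint.domain) :
    Set ↥T0t.adjoint.domain :=
  {u | (bform T0 T0t hW u u).re ≤ 0}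

/-- (V)-boundary conditions for a subset `V` of the graph space `W`. -/
def VBC (T0 T0t : H →ₗ.[ℂ] H) (hW : T0t.adjoint.domain = T0.adjoint.domain)
    (V : Set ↥T0t.adjoint.domain) : Prop :=
  V ⊆ Wplus T0 T0t hW ∧ iorth T0 T0t hW V ⊆ Wminus T0 T0t hW ∧
    V = iorth T0 T0t hW (iorth T0 T0t hW V)

/-- The graph norm `‖u‖_{T₁} = ‖u‖ + ‖T₁ u‖` on the graph space. -/
def gnorm (T0t : H →ₗ.[ℂ] H) (u : T0t.adjoint.domain) : ℝ :=
  ‖(u : H)‖ + ‖T0t.adjoint u‖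

/-- The distance associated with the graph norm. -/
def gdist (T0t : H →ₗ.[ℂ] H) (u v : T0t.adjoint.domain) : ℝ := gnorm T0t (u - v)

/-- Closedness (sequential) in the graph-norm topology of `W`. -/
def GClosed (T0t : H →ₗ.[ℂ] H) (X : Set ↥T0t.adjoint.domain) : Prop :=
  ∀ f : ℕ → ↥T0t.adjoint.domain, (∀ n, f n ∈ X) →
    ∀ l, Tendsto (fun n => gdist T0t (f n) l) atTop (𝓝 0) → l ∈ X

/-- `W₀` (the domain of the closure of `T₀`), viewed as a subset of the graph space `W`. -/
def W0set (T0 T0t : H →ₗ.[ℂ] H) : Set ↥T0t.adjoint.domain :=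
  {u | (u : H) ∈ T0.closure.domain}

/-- The graph inner product on `W` (in the paper's convention). -/
def gip (T0t : H →ₗ.[ℂ] H) (u v : ↥T0t.adjoint.domain) : ℂ :=
  pInner (u : H) (v : H) + pInner (T0t.adjoint u) (T0t.adjoint v)

/-- The (Hilbert) orthogonal complement of `W₀` in the graph space. -/
def W0perp (T0 T0t : H →ₗ.[ℂ] H) : Set ↥T0t.adjoint.domain :=
  {u | ∀ v : ↥T0t.adjoint.domain, (v : H) ∈ T0.closure.domain → gip T0t u v = 0}

/-- `ker T₁` as a subset of the graph space. -/
def kerT1set (T0t : H →ₗ.[ℂ] H) : Set ↥T0t.adjoint.domain := {u | T0t.adjoint u = 0}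

/-- `ker T̃₁` as a subset of the graph space. -/
def kerT1tset (T0 T0t : H →ₗ.[ℂ] H) (hW : T0t.adjoint.domain = T0.adjoint.domain) :
    Set ↥T0t.adjoint.domain :=
  {u | T0.adjoint ⟨(u : H), hW.le u.2⟩ = 0}

/-- An operator `M ∈ L(W;W')`, encoded through the pairing `m u v = ⟨Mu, v⟩_{W',W}`
(linear in `u`, antilinear in `v`, and bounded with respect to the graph norm). -/
structure MOp (T0t : H →ₗ.[ℂ] H) where
  m : ↥T0t.adjoint.domain → ↥T0t.adjoint.domain → ℂ
  add_left : ∀ u v w, m (u + v) w = m u w + m v w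
  smul_left : ∀ (c : ℂ) (u w), m (c • u) w = c * m u w
  add_right : ∀ u v w, m u (v + w) = m u v + m u w
  smul_right : ∀ (c : ℂ) (u w), m u (c • w) = starRingEnd ℂ c * m u w
  bounded : ∃ C, ∀ u v, ‖m u v‖ ≤ C * (gnorm T0t u * gnorm T0t v)

/-- The (M)-boundary conditions for a pairing `m u v = ⟨Mu, v⟩_{W',W}`:
(M1) non-negativity and (M2) `W = ker (D − M) + ker (D + M)`. -/
def MBC (T0 T0t : H →ₗ.[ℂ] H) (hW : T0t.adjoint.domain = T0.adjoint.domain)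
    (m : ↥T0t.adjoint.domain → ↥T0t.adjoint.domain → ℂ) : Prop :=
  (∀ u, 0 ≤ (m u u).re) ∧
  (∀ w : ↥T0t.adjoint.domain, ∃ a b : ↥T0t.adjoint.domain,
    (∀ v, bform T0 T0t hW a v = m a v) ∧ (∀ v, bform T0 T0t hW b v + m b v = 0) ∧ w = a + b)

/-- `ker (D − M)` for a pairing `m`. -/
def kerDsubM (T0 T0t : H →ₗ.[ℂ] H) (hW : T0t.adjoint.domain = T0.adjoint.domain)
    (m : ↥T0t.adjoint.domain → ↥T0t.adjoint.domain → ℂ) : Set ↥T0t.adjoint.domain :=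
  {u | ∀ v, bform T0 T0t hW u v = m u v}

/-- `ker (D + M)` for a pairing `m`. -/
def kerDaddM (T0 T0t : H →ₗ.[ℂ] H) (hW : T0t.adjoint.domain = T0.adjoint.domain)
    (m : ↥T0t.adjoint.domain → ↥T0t.adjoint.domain → ℂ) : Set ↥T0t.adjoint.domain :=
  {u | ∀ v, bform T0 T0t hW u v + m u v = 0}


/-! `T₁ + T̃₁` is the bounded extension of `T₀ + T̃₀`, hence self-adjoint, bounded by `2λ` and
coercive with constant `2μ`. Since `Re [u|u] = 2 Re ⟨T₁u, u⟩ - Re ⟨(T₁ + T̃₁)u, u⟩`, this gives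
`μ‖u‖ ≤ ‖T₁u‖` on `W⁺` and `μ‖u‖ ≤ ‖T̃₁u‖` on `W⁻`. On `V ⊆ W⁺` the operator `T₁` is therefore
injective, and its range is closed because `V = Ṽ^[⊥]` is closed in the graph norm. A vector
orthogonal to `T₁(V)` is orthogonal to `T₀(D)` (as `D ⊆ V`), so it lies in `ker T̃₁ ∩ Ṽ = 0`;
thus `T₁(V) = H` and `W = V ∔ ker T₁`.

Writing `u = a + k` with `a ∈ V`, `k ∈ ker T₁`, we get `Re ⟨Mu, u⟩ = Re [a|a] - Re [k|k] ≥ 0`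
because `[·|·]` is hermitian and `[k|k] = -⟨(T₁ + T̃₁)k, k⟩`. Finally `(D - M)u = 2 D p₂u`
vanishes iff `p₂u ∈ W^[⊥] ⊆ Ṽ^[⊥] = V`, i.e. iff `p₂u = 0`, i.e. iff `u ∈ V`. -/

section ClosedRange

variable {𝕜 E F : Type*} [NontriviallyNormedField 𝕜] [NormedAddCommGroup E]
  [NormedAddCommGroup F] [NormedSpace 𝕜 E] [NormedSpace 𝕜 F] [CompleteSpace E] [CompleteSpace F]

theorem Submodule.isClosed_map_snd_of_norm_fst_le (Γ : Submodule 𝕜 (E × F))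
    (hΓ : IsClosed (Γ : Set (E × F))) (C : ℝ) (hC : ∀ p ∈ Γ, ‖p.1‖ ≤ C * ‖p.2‖) :
    IsClosed (Γ.map (LinearMap.snd 𝕜 E F) : Set F) := by
  have : CompleteSpace Γ := hΓ.completeSpace_coe
  let f : Γ →L[𝕜] F := (ContinuousLinearMap.snd 𝕜 E F).comp Γ.subtypeL
  have hf : AntilipschitzWith ⟨max C 1, le_max_of_le_right zero_le_one⟩ f := by
    refine f.antilipschitz_of_bound fun p => max_le ?_ ?_
    · exact (hC p p.2).trans (mul_le_mul_of_nonneg_right (le_max_left _ _) (norm_nonneg _))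
    · exact le_mul_of_one_le_left (norm_nonneg _) (le_max_right _ _)
  convert hf.isClosed_range f.uniformContinuous using 1
  ext y
  simp [f]

end ClosedRange

section Projection

variable {R M : Type*} [Ring R] [AddCommGroup M] [Module R M] {p q : Submodule R M} {f : M → M}

theorem Disjoint.proj_eq_zero_of_mem_left (hpq : Disjoint p q)
    (hf : ∀ u, f u ∈ q ∧ u - f u ∈ p) {u : M} (hu : u ∈ p) : f u = 0 :=
  Submodule.disjoint_def.1 hpq _ (by simpa using p.sub_mem hu (hf u).2) (hf u).1

theorem Disjoint.proj_eq_self_of_mem_right (hpq : Disjoint p q)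
    (hf : ∀ u, f u ∈ q ∧ u - f u ∈ p) {u : M} (hu : u ∈ q) : f u = u :=
  (sub_eq_zero.1 (Submodule.disjoint_def.1 hpq _ (hf u).2 (q.sub_mem hu (hf u).1))).symm

end Projection

theorem mul_norm_le_norm_of_mul_norm_sq_le_re_inner {E : Type*} [NormedAddCommGroup E]
    [InnerProductSpace ℂ E] {c : ℝ} {u x : E} (h : c * ‖u‖ ^ 2 ≤ (⟪u, x⟫_ℂ).re) :
    c * ‖u‖ ≤ ‖x‖ := by
  rcases (norm_nonneg u).eq_or_lt with hu | hu
  · simp [← hu]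
  · have : c * ‖u‖ ^ 2 ≤ ‖u‖ * ‖x‖ := h.trans (re_inner_le_norm (𝕜 := ℂ) u x)
    nlinarith

/-- `T̃₁` on the graph space `W = dom T₁`. -/
def T1t (T0 T0t : H →ₗ.[ℂ] H) (hW : T0t.adjoint.domain = T0.adjoint.domain) :
    T0t.adjoint.domain →ₗ[ℂ] H :=
  T0.adjoint.toFun ∘ₗ Submodule.inclusion hW.le

theorem gnorm_nonneg (T0t : H →ₗ.[ℂ] H) (u : T0t.adjoint.domain) : 0 ≤ gnorm T0t u :=
  add_nonneg (norm_nonneg _) (norm_nonneg _)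

section BoundaryForm

variable {T0 T0t : H →ₗ.[ℂ] H} {hW : T0t.adjoint.domain = T0.adjoint.domain}

theorem bform_apply (u v : T0t.adjoint.domain) :
    bform T0 T0t hW u v = ⟪(v : H), T0t.adjoint u⟫_ℂ - ⟪T1t T0 T0t hW v, (u : H)⟫_ℂ :=
  rfl

theorem bform_add_right (u v w : T0t.adjoint.domain) :
    bform T0 T0t hW u (v + w) = bform T0 T0t hW u v + bform T0 T0t hW u w := by
  simp only [bform_apply, _root_.map_add, Submodule.coe_add, inner_add_left]
  ring

theorem bform_sub_left (u v w : T0t.adjoint.domain) :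
    bform T0 T0t hW (u - v) w = bform T0 T0t hW u w - bform T0 T0t hW v w := by
  simp only [bform_apply, LinearPMap.map_sub, Submodule.coe_sub, inner_sub_right]
  ring

theorem bform_smul_left (c : ℂ) (u v : T0t.adjoint.domain) :
    bform T0 T0t hW (c • u) v = c * bform T0 T0t hW u v := by
  simp only [bform_apply, LinearPMap.map_smul, Submodule.coe_smul, inner_smul_right]
  ring

theorem bform_neg_left (u v : T0t.adjoint.domain) :
    bform T0 T0t hW (-u) v = -bform T0 T0t hW u v := by
  simp only [bform_apply, LinearPMap.map_neg, Submodule.coe_neg, inner_neg_right]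
  ring

end BoundaryForm

namespace IsDualPairT12

variable {T0 T0t : H →ₗ.[ℂ] H} {lam : ℝ}

omit [CompleteSpace H] in
theorem isFormalAdjoint (hF : IsDualPairT12 T0 T0t lam) : T0t.IsFormalAdjoint T0 :=
  fun ψ φ => (hF.sym φ ψ).symm

omit [CompleteSpace H] in
theorem dense_domain_right (hF : IsDualPairT12 T0 T0t lam) : Dense (T0t.domain : Set H) :=
  hF.dom_eq ▸ hF.dense'

theorem le_adjoint (hF : IsDualPairT12 T0 T0t lam) : T0 ≤ T0t.adjoint :=
  hF.isFormalAdjoint.le_adjoint hF.dense_domain_right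

/-- The bounded extension of `T₀ + T̃₀` from the common domain to `H`. -/
def sumExt (hF : IsDualPairT12 T0 T0t lam) : H →L[ℂ] H :=
  ((T0.toFun + T0t.toFun ∘ₗ Submodule.inclusion hF.dom_eq.le).mkContinuous (2 * lam)
    fun x => hF.bound x x.2).extend T0.domain.subtypeL

theorem sumExt_coe (hF : IsDualPairT12 T0 T0t lam) (x : T0.domain) :
    hF.sumExt x = T0 x + T0t ⟨x, hF.dom_eq.le x.2⟩ :=
  ContinuousLinearMap.extend_eq _ hF.dense'.denseRange_val (isUniformInducing_val _) x

theorem norm_sumExt_apply_le (hF : IsDualPairT12 T0 T0t lam) (x : H) :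
    ‖hF.sumExt x‖ ≤ 2 * lam * ‖x‖ :=
  hF.dense'.induction (P := fun x => ‖hF.sumExt x‖ ≤ 2 * lam * ‖x‖)
    (fun x hx => by simpa only [sumExt_coe hF ⟨x, hx⟩] using hF.bound x hx)
    (isClosed_le (by fun_prop) (by fun_prop)) x

theorem inner_sumExt_left (hF : IsDualPairT12 T0 T0t lam) (x y : H) :
    ⟪hF.sumExt x, y⟫_ℂ = ⟪x, hF.sumExt y⟫_ℂ := by
  refine hF.dense'.denseRange_val.induction_on₂
    (p := fun x y => ⟪hF.sumExt x, y⟫_ℂ = ⟪x, hF.sumExt y⟫_ℂ)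
    (isClosed_eq (by fun_prop) (by fun_prop)) (fun φ ψ => ?_) x y
  have h1 := hF.isFormalAdjoint ⟨φ, hF.dom_eq.le φ.2⟩ ψ
  have h2 := hF.isFormalAdjoint.symm φ ⟨ψ, hF.dom_eq.le ψ.2⟩
  simp only [sumExt_coe, inner_add_left, inner_add_right]
  rw [h1, h2, add_comm]

theorem adjoint_add_T1t (hF : IsDualPairT12 T0 T0t lam)
    (hW : T0t.adjoint.domain = T0.adjoint.domain) (u : T0t.adjoint.domain) :
    T0t.adjoint u + T1t T0 T0t hW u = hF.sumExt u := by
  refine hF.dense'.eq_of_inner_left (𝕜 := ℂ) fun χ hχ => ?_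
  have h1 := LinearPMap.adjoint_isFormalAdjoint hF.dense_domain_right u ⟨χ, hF.dom_eq.le hχ⟩
  have h2 : ⟪T1t T0 T0t hW u, χ⟫_ℂ = ⟪(u : H), T0 ⟨χ, hχ⟩⟫_ℂ :=
    LinearPMap.adjoint_isFormalAdjoint hF.dense' ⟨u, hW.le u.2⟩ ⟨χ, hχ⟩
  rw [inner_sumExt_left, sumExt_coe hF ⟨χ, hχ⟩, inner_add_left, inner_add_right, h1, h2,
    add_comm]

theorem conj_bform (hF : IsDualPairT12 T0 T0t lam)
    (hW : T0t.adjoint.domain = T0.adjoint.domain) (u v : T0t.adjoint.domain) :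
    starRingEnd ℂ (bform T0 T0t hW u v) = bform T0 T0t hW v u := by
  have h := hF.inner_sumExt_left u v
  rw [← hF.adjoint_add_T1t hW u, ← hF.adjoint_add_T1t hW v, inner_add_left,
    inner_add_right] at h
  rw [bform_apply, bform_apply, _root_.map_sub, inner_conj_symm, inner_conj_symm]
  linear_combination h

theorem re_bform_self (hF : IsDualPairT12 T0 T0t lam)
    (hW : T0t.adjoint.domain = T0.adjoint.domain) (u : T0t.adjoint.domain) :
    (bform T0 T0t hW u u).re =
      2 * (⟪(u : H), T0t.adjoint u⟫_ℂ).re - (⟪(u : H), hF.sumExt u⟫_ℂ).re := by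
  rw [bform_apply, ← hF.adjoint_add_T1t hW u, inner_add_right,
    ← inner_conj_symm (u : H) (T1t T0 T0t hW u)]
  simp only [Complex.sub_re, Complex.add_re, Complex.conj_re]
  ring

theorem norm_T1t_le (hF : IsDualPairT12 T0 T0t lam)
    (hW : T0t.adjoint.domain = T0.adjoint.domain) (u : T0t.adjoint.domain) :
    ‖T1t T0 T0t hW u‖ ≤ ‖T0t.adjoint u‖ + 2 * lam * ‖(u : H)‖ := by
  rw [← add_sub_cancel_left (T0t.adjoint u) (T1t T0 T0t hW u), hF.adjoint_add_T1t hW u]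
  exact (norm_sub_le _ _).trans (by linarith [hF.norm_sumExt_apply_le u])

theorem norm_bform_le (hF : IsDualPairT12 T0 T0t lam)
    (hW : T0t.adjoint.domain = T0.adjoint.domain) (u v : T0t.adjoint.domain) :
    ‖bform T0 T0t hW u v‖ ≤ (1 + 2 * lam) * (gnorm T0t u * gnorm T0t v) := by
  have h1 : ‖bform T0 T0t hW u v‖ ≤
      ‖(v : H)‖ * ‖T0t.adjoint u‖ + ‖T1t T0 T0t hW v‖ * ‖(u : H)‖ :=
    (norm_sub_le _ _).trans (add_le_add (norm_inner_le_norm _ _) (norm_inner_le_norm _ _))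
  have h2 := hF.norm_T1t_le hW v
  have hlam := hF.lam_pos
  unfold gnorm
  have n1 := norm_nonneg (u : H); have n2 := norm_nonneg (T0t.adjoint u)
  have n3 := norm_nonneg (v : H); have n4 := norm_nonneg (T0t.adjoint v)
  nlinarith [mul_nonneg n1 n3, mul_nonneg n1 n4, mul_nonneg n2 n3, mul_nonneg n2 n4,
    mul_nonneg (mul_nonneg n2 n4) hlam.le, mul_nonneg (mul_nonneg n2 n3) hlam.le]

theorem bform_eq_zero_of_mem_domain (hF : IsDualPairT12 T0 T0t lam)
    (hW : T0t.adjoint.domain = T0.adjoint.domain) {u : T0t.adjoint.domain}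
    (hu : (u : H) ∈ T0.domain) (v : T0t.adjoint.domain) : bform T0 T0t hW u v = 0 := by
  have h1 : T0t.adjoint u = T0 ⟨u, hu⟩ := (hF.le_adjoint.2 rfl).symm
  have h2 : ⟪T1t T0 T0t hW v, (u : H)⟫_ℂ = ⟪(v : H), T0 ⟨u, hu⟩⟫_ℂ :=
    LinearPMap.adjoint_isFormalAdjoint hF.dense' ⟨v, hW.le v.2⟩ ⟨u, hu⟩
  rw [bform_apply, h1, h2, sub_self]

theorem isClosed_map_subtype_prod_adjoint (hF : IsDualPairT12 T0 T0t lam)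
    {hW : T0t.adjoint.domain = T0.adjoint.domain} {V : Submodule ℂ T0t.adjoint.domain}
    (hV : iorth T0 T0t hW (iorth T0 T0t hW V) ⊆ V) :
    IsClosed (V.map (T0t.adjoint.domain.subtype.prod T0t.adjoint.toFun) : Set (H × H)) := by
  set Γ := V.map (T0t.adjoint.domain.subtype.prod T0t.adjoint.toFun)
  refine isClosed_of_closure_subset fun p hp => ?_
  have hgraph : (Γ : Set (H × H)) ⊆ T0t.adjoint.graph := by
    rintro _ ⟨v, -, rfl⟩
    exact T0t.adjoint.mem_graph v
  obtain ⟨x, hx1, hx2⟩ := T0t.adjoint.mem_graph_iff.1 <|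
    (LinearPMap.adjoint_isClosed hF.dense_domain_right).closure_subset (closure_mono hgraph hp)
  obtain rfl : p = ((x : H), T0t.adjoint x) := Prod.ext hx1.symm hx2.symm
  refine ⟨x, hV fun w hw => ?_, rfl⟩
  have hvanish : closure (Γ : Set (H × H)) ⊆
      {q | ⟪(w : H), q.2⟫_ℂ - ⟪T1t T0 T0t hW w, q.1⟫_ℂ = 0} := by
    refine closure_minimal ?_ (isClosed_eq (by fun_prop) continuous_const)
    rintro _ ⟨v, hv, rfl⟩
    show bform T0 T0t hW v w = 0
    rw [← hF.conj_bform, hw v hv, _root_.map_zero]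
  exact hvanish hp

end IsDualPairT12

namespace IsFriedrichsPair

variable {T0 T0t : H →ₗ.[ℂ] H} {lam mu : ℝ}

theorem mul_norm_sq_le_re_inner_sumExt (hF : IsFriedrichsPair T0 T0t lam mu) (x : H) :
    2 * mu * ‖x‖ ^ 2 ≤ (⟪x, hF.sumExt x⟫_ℂ).re :=
  hF.dense'.induction (P := fun x => 2 * mu * ‖x‖ ^ 2 ≤ (⟪x, hF.sumExt x⟫_ℂ).re)
    (fun x hx => by rw [IsDualPairT12.sumExt_coe _ ⟨x, hx⟩]; exact hF.coercive x hx)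
    (isClosed_le (by fun_prop) (by fun_prop)) x

variable {hW : T0t.adjoint.domain = T0.adjoint.domain}

theorem mul_norm_le_norm_adjoint_of_mem_Wplus (hF : IsFriedrichsPair T0 T0t lam mu)
    {u : T0t.adjoint.domain} (hu : u ∈ Wplus T0 T0t hW) : mu * ‖(u : H)‖ ≤ ‖T0t.adjoint u‖ := by
  refine mul_norm_le_norm_of_mul_norm_sq_le_re_inner ?_
  have : 0 ≤ (bform T0 T0t hW u u).re := hu
  linarith [hF.re_bform_self hW u, hF.mul_norm_sq_le_re_inner_sumExt u]

theorem mul_norm_le_norm_T1t_of_mem_Wminus (hF : IsFriedrichsPair T0 T0t lam mu)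
    {u : T0t.adjoint.domain} (hu : u ∈ Wminus T0 T0t hW) :
    mu * ‖(u : H)‖ ≤ ‖T1t T0 T0t hW u‖ := by
  refine mul_norm_le_norm_of_mul_norm_sq_le_re_inner ?_
  have : (bform T0 T0t hW u u).re ≤ 0 := hu
  have hsum := congrArg (fun x => (⟪(u : H), x⟫_ℂ).re) (hF.adjoint_add_T1t hW u)
  simp only [inner_add_right, Complex.add_re] at hsum
  linarith [hF.re_bform_self hW u, hF.mul_norm_sq_le_re_inner_sumExt u]

theorem re_bform_self_nonpos_of_adjoint_eq_zero (hF : IsFriedrichsPair T0 T0t lam mu)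
    (hW : T0t.adjoint.domain = T0.adjoint.domain) {u : T0t.adjoint.domain}
    (hu : T0t.adjoint u = 0) : (bform T0 T0t hW u u).re ≤ 0 := by
  have := hF.re_bform_self hW u
  rw [hu, inner_zero_right, Complex.zero_re] at this
  nlinarith [hF.mul_norm_sq_le_re_inner_sumExt u, hF.mu_pos, sq_nonneg ‖(u : H)‖]

theorem re_bform_sub_add_nonneg (hF : IsFriedrichsPair T0 T0t lam mu)
    {a k : T0t.adjoint.domain} (ha : a ∈ Wplus T0 T0t hW) (hk : T0t.adjoint k = 0) :
    0 ≤ (bform T0 T0t hW (a - k) (a + k)).re := by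
  have haa : 0 ≤ (bform T0 T0t hW a a).re := ha
  have hkk := hF.re_bform_self_nonpos_of_adjoint_eq_zero hW hk
  have hsymm := congrArg Complex.re (hF.conj_bform hW a k)
  rw [Complex.conj_re] at hsymm
  simp only [bform_sub_left, bform_add_right, Complex.sub_re, Complex.add_re]
  linarith

variable {V : Submodule ℂ T0t.adjoint.domain}

theorem inf_ker_adjoint_eq_bot (hF : IsFriedrichsPair T0 T0t lam mu)
    (hV : (V : Set T0t.adjoint.domain) ⊆ Wplus T0 T0t hW) :
    V ⊓ LinearMap.ker T0t.adjoint.toFun = ⊥ := by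
  refine (Submodule.eq_bot_iff _).2 fun u hu => ?_
  have h := hF.mul_norm_le_norm_adjoint_of_mem_Wplus (hV hu.1)
  rw [show T0t.adjoint u = 0 from hu.2, norm_zero] at h
  exact Submodule.coe_eq_zero.1 (norm_le_zero_iff.1 (by nlinarith [hF.mu_pos, norm_nonneg (u : H)]))

theorem isClosed_map_adjoint (hF : IsFriedrichsPair T0 T0t lam mu)
    (hV : VBC T0 T0t hW (V : Set T0t.adjoint.domain)) :
    IsClosed (V.map T0t.adjoint.toFun : Set H) := by
  have h := Submodule.isClosed_map_snd_of_norm_fst_le _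
    (hF.isClosed_map_subtype_prod_adjoint hV.2.2.symm.subset) mu⁻¹ ?_
  · rwa [← Submodule.map_comp, LinearMap.snd_prod] at h
  rintro _ ⟨v, hv, rfl⟩
  exact (le_inv_mul_iff₀ hF.mu_pos).2 (hF.mul_norm_le_norm_adjoint_of_mem_Wplus (hV.1 hv))

theorem orthogonal_map_adjoint_eq_bot (hF : IsFriedrichsPair T0 T0t lam mu)
    (hV : VBC T0 T0t hW (V : Set T0t.adjoint.domain)) :
    (V.map T0t.adjoint.toFun)ᗮ = ⊥ := by
  refine (Submodule.eq_bot_iff _).2 fun y hy => ?_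
  have hT0 : ∀ ψ : T0.domain, ⟪(0 : H), ψ⟫_ℂ = ⟪y, T0 ψ⟫_ℂ := by
    intro ψ
    set ψW : T0t.adjoint.domain := ⟨ψ, hF.le_adjoint.1 ψ.2⟩
    have hψV : ψW ∈ V := hV.2.2.symm.subset fun w _ => hF.bform_eq_zero_of_mem_domain hW ψ.2 w
    rw [inner_zero_left, hF.le_adjoint.2 (x := ψ) (y := ψW) rfl]
    exact (Submodule.inner_left_of_mem_orthogonal (Submodule.mem_map_of_mem hψV) hy).symm
  have hdom : y ∈ T0.adjoint.domain := LinearPMap.mem_adjoint_domain_of_exists y ⟨0, hT0⟩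
  set z : T0t.adjoint.domain := ⟨y, hW.ge hdom⟩
  have hz : T1t T0 T0t hW z = 0 := LinearPMap.adjoint_apply_eq hF.dense' ⟨y, hdom⟩ hT0
  have hzV : z ∈ iorth T0 T0t hW V := fun v hv => by
    rw [← hF.conj_bform, bform_apply, hz, inner_zero_left, sub_zero, map_eq_zero]
    exact Submodule.inner_left_of_mem_orthogonal (Submodule.mem_map_of_mem hv) hy
  have hμ := hF.mul_norm_le_norm_T1t_of_mem_Wminus (hV.2.1 hzV)
  rw [hz, norm_zero] at hμ
  exact norm_le_zero_iff.1 (by nlinarith [hF.mu_pos, norm_nonneg y])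

theorem sup_ker_adjoint_eq_top (hF : IsFriedrichsPair T0 T0t lam mu)
    (hV : VBC T0 T0t hW (V : Set T0t.adjoint.domain)) :
    V ⊔ LinearMap.ker T0t.adjoint.toFun = ⊤ := by
  have : CompleteSpace (V.map T0t.adjoint.toFun) := (isClosed_map_adjoint hF hV).completeSpace_coe
  rw [← Submodule.comap_map_eq, Submodule.orthogonal_eq_bot_iff.1
    (orthogonal_map_adjoint_eq_bot hF hV), Submodule.comap_top]

variable {p2 : T0t.adjoint.domain → T0t.adjoint.domain}

theorem gnorm_sub_two_smul_proj_le (hF : IsFriedrichsPair T0 T0t lam mu)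
    (hV : (V : Set T0t.adjoint.domain) ⊆ Wplus T0 T0t hW)
    (hp2 : ∀ u, p2 u ∈ LinearMap.ker T0t.adjoint.toFun ∧ u - p2 u ∈ V) (u : T0t.adjoint.domain) :
    gnorm T0t (u - (2 : ℂ) • p2 u) ≤ (3 + 2 * mu⁻¹) * gnorm T0t u := by
  have hk : T0t.adjoint (p2 u) = 0 := (hp2 u).1
  have ha : mu * ‖((u - p2 u : T0t.adjoint.domain) : H)‖ ≤ ‖T0t.adjoint u‖ := by
    simpa [LinearPMap.map_sub, hk] using hF.mul_norm_le_norm_adjoint_of_mem_Wplus (hV (hp2 u).2)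
  have hpu : ‖(p2 u : H)‖ ≤ ‖(u : H)‖ + mu⁻¹ * ‖T0t.adjoint u‖ := by
    refine (norm_le_insert' _ (u : H)).trans (add_le_add_right ?_ _)
    rw [norm_sub_rev]
    exact (le_inv_mul_iff₀ hF.mu_pos).2 ha
  have hsub : ‖((u - (2 : ℂ) • p2 u : T0t.adjoint.domain) : H)‖ ≤
      ‖(u : H)‖ + 2 * ‖(p2 u : H)‖ := by
    simpa [norm_smul] using norm_sub_le (u : H) ((2 : ℂ) • (p2 u : H))
  have hμ : 0 ≤ mu⁻¹ := inv_nonneg.2 hF.mu_pos.le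
  unfold gnorm
  rw [LinearPMap.map_sub, LinearPMap.map_smul, hk, smul_zero, sub_zero]
  nlinarith [mul_nonneg hμ (norm_nonneg (u : H)), norm_nonneg (T0t.adjoint u)]

theorem norm_bform_sub_two_smul_proj_le (hF : IsFriedrichsPair T0 T0t lam mu)
    (hV : (V : Set T0t.adjoint.domain) ⊆ Wplus T0 T0t hW)
    (hp2 : ∀ u, p2 u ∈ LinearMap.ker T0t.adjoint.toFun ∧ u - p2 u ∈ V)
    (u v : T0t.adjoint.domain) :
    ‖bform T0 T0t hW (u - (2 : ℂ) • p2 u) v‖ ≤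
      (1 + 2 * lam) * (3 + 2 * mu⁻¹) * (gnorm T0t u * gnorm T0t v) := by
  refine (hF.norm_bform_le hW _ v).trans ?_
  rw [mul_assoc, ← mul_assoc (3 + 2 * mu⁻¹)]
  gcongr
  · linarith [hF.lam_pos]
  · exact gnorm_nonneg T0t v
  · exact hF.gnorm_sub_two_smul_proj_le hV hp2 u

end IsFriedrichsPair

section BoundaryOperator

variable {T0 T0t : H →ₗ.[ℂ] H} {hW : T0t.adjoint.domain = T0.adjoint.domain}
  {V : Submodule ℂ T0t.adjoint.domain} {p2 : T0t.adjoint.domain → T0t.adjoint.domain}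

theorem kerDsubM_sub_two_smul_proj_eq (hdisj : Disjoint V (LinearMap.ker T0t.adjoint.toFun))
    (hV : iorth T0 T0t hW (iorth T0 T0t hW V) ⊆ V)
    (hp2 : ∀ u, p2 u ∈ LinearMap.ker T0t.adjoint.toFun ∧ u - p2 u ∈ V) :
    kerDsubM T0 T0t hW (fun u v => bform T0 T0t hW (u - (2 : ℂ) • p2 u) v) = V := by
  ext u
  refine ⟨fun hu => ?_, fun hu v => ?_⟩
  · have hDp2 : ∀ v, bform T0 T0t hW (p2 u) v = 0 := fun v => by
      have : bform T0 T0t hW u v = bform T0 T0t hW (u - (2 : ℂ) • p2 u) v := hu v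
      rw [bform_sub_left, bform_smul_left] at this
      exact (mul_eq_zero.1 (by linear_combination this)).resolve_left two_ne_zero
    have hp2u : p2 u = 0 := Submodule.disjoint_def.1 hdisj _ (hV fun w _ => hDp2 w) (hp2 u).1
    simpa [hp2u] using (hp2 u).2
  · dsimp only
    rw [hdisj.proj_eq_zero_of_mem_left hp2 hu, smul_zero, sub_zero]

end BoundaryOperator

/-- Theorem 5.2: if `V` satisfies the (V)-boundary conditions then `W = V ∔ ker T₁`,
and for the projection `p₂` onto `ker T₁` along `V`, the operator `M = D(1 − 2p₂)`
belongs to `L(W;W')`, satisfies the (M)-boundary conditions and `ker (D − M) = V`. -/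
theorem VBC_direct_sum_kerT1_and_M_of_projection
    (T0 T0t : H →ₗ.[ℂ] H) (lam mu : ℝ) (hF : IsFriedrichsPair T0 T0t lam mu)
    (hW : T0t.adjoint.domain = T0.adjoint.domain)
    (V : Submodule ℂ ↥T0t.adjoint.domain) (hV : VBC T0 T0t hW (V : Set _)) :
    (V ⊓ LinearMap.ker T0t.adjoint.toFun = ⊥ ∧ V ⊔ LinearMap.ker T0t.adjoint.toFun = ⊤) ∧
    (∀ p2 : ↥T0t.adjoint.domain →ₗ[ℂ] ↥T0t.adjoint.domain,
      (∀ u, p2 u ∈ LinearMap.ker T0t.adjoint.toFun ∧ u - p2 u ∈ V) →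
      (∃ C, ∀ u v, ‖bform T0 T0t hW (u - (2 : ℂ) • p2 u) v‖ ≤
          C * (gnorm T0t u * gnorm T0t v)) ∧
      MBC T0 T0t hW (fun u v => bform T0 T0t hW (u - (2 : ℂ) • p2 u) v) ∧
      kerDsubM T0 T0t hW (fun u v => bform T0 T0t hW (u - (2 : ℂ) • p2 u) v) = (V : Set _)) := by
  have hinf : V ⊓ LinearMap.ker T0t.adjoint.toFun = ⊥ := hF.inf_ker_adjoint_eq_bot hV.1
  have hdisj := disjoint_iff.2 hinf
  refine ⟨⟨hinf, hF.sup_ker_adjoint_eq_top hV⟩, fun p2 hp2 => ⟨?_, ⟨fun u => ?_, fun w => ?_⟩,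
    kerDsubM_sub_two_smul_proj_eq hdisj hV.2.2.symm.subset hp2⟩⟩
  · exact ⟨_, hF.norm_bform_sub_two_smul_proj_le hV.1 hp2⟩
  · have := hF.re_bform_sub_add_nonneg (hV.1 (hp2 u).2) (hp2 u).1
    rwa [sub_add_cancel, sub_sub, ← two_smul ℂ] at this
  · refine ⟨w - p2 w, p2 w, fun v => ?_, fun v => ?_, (sub_add_cancel w (p2 w)).symm⟩
    · dsimp only
      rw [hdisj.proj_eq_zero_of_mem_left hp2 (hp2 w).2, smul_zero, sub_zero]
    · dsimp only
      rw [hdisj.proj_eq_self_of_mem_right hp2 (hp2 w).1, two_smul, sub_add_eq_sub_sub,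
        sub_self, zero_sub, bform_neg_left, add_neg_cancel]
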